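/- Let v : ℝ² → ℝ be a continuously differentiable function with compact support. Then ∫_{ℝ²} v(x)⁴ dx ≤ 2 (∫_{ℝ²} v(x)² dx) (∫_{ℝ²} |∇v(x)|² dx), where |∇v(x)|² = (∂₁v(x))² + (∂₂v(x))². -/

import Mathlib

open MeasureTheory

lemma slice_bound {w w' : ℝ → ℝ} (hw : ∀ t, HasDerivAt w (w' t) t)
    (hc : HasCompactSupport w) (hi : Integrable w') (a : ℝ) :
    w a ≤ ∫ t, |w' t| := by
  obtain ⟨R, hR⟩ := hc.isCompact.isBounded.subset_closedBall 0
  set c : ℝ := min (-R - 1) (a - 1) with hc'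
  have hca : c ≤ a := le_trans (min_le_right _ _) (by linarith)
  have hwc : w c = 0 := by
    apply image_eq_zero_of_notMem_tsupport
    intro hmem
    have := hR hmem
    rw [Real.closedBall_eq_Icc] at this
    have h1 : c ≤ -R - 1 := min_le_left _ _
    have := this.1
    simp at this
    linarith
  have key : ∫ t in c..a, w' t = w a - w c :=
    intervalIntegral.integral_eq_sub_of_hasDerivAt (fun t _ => hw t) hi.intervalIntegrable
  have h2 : w a = ∫ t in c..a, w' t := by rw [key, hwc]; ring
  rw [h2]
  calc ∫ t in c..a, w' t ≤ |∫ t in c..a, w' t| := le_abs_self _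
    _ ≤ ∫ t in c..a, |w' t| := intervalIntegral.abs_integral_le_integral_abs hca
    _ = ∫ t in Set.Ioc c a, |w' t| := intervalIntegral.integral_of_le hca
    _ ≤ ∫ t, |w' t| := setIntegral_le_integral hi.abs (Filter.Eventually.of_forall fun t => abs_nonneg _)

open Set in
lemma ladyzhenskaya_core (u : ℝ × ℝ → ℝ) (hu : ContDiff ℝ 1 u) (hc : HasCompactSupport u) :
    ∫ p : ℝ × ℝ, u p ^ 4 ≤
      2 * (∫ p : ℝ × ℝ, u p ^ 2) *
        ∫ p : ℝ × ℝ, (fderiv ℝ u p (1, 0)) ^ 2 + (fderiv ℝ u p (0, 1)) ^ 2 := by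
  have hud : Differentiable ℝ u := hu.differentiable one_ne_zero
  set f : ℝ × ℝ → ℝ := fun p => fderiv ℝ u p (1, 0) with hf
  set g : ℝ × ℝ → ℝ := fun p => fderiv ℝ u p (0, 1) with hg
  have hfderiv_cont : Continuous (fderiv ℝ u) := hu.continuous_fderiv one_ne_zero
  have hfc : Continuous f := hfderiv_cont.clm_apply continuous_const
  have hgc : Continuous g := hfderiv_cont.clm_apply continuous_const
  have hfs : HasCompactSupport f := hc.fderiv_apply ℝ (1, 0)
  have hgs : HasCompactSupport g := hc.fderiv_apply ℝ (0, 1)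
  -- F₁, F₂
  set F₁ : ℝ × ℝ → ℝ := fun p => 2 * u p * f p with hF₁
  set F₂ : ℝ × ℝ → ℝ := fun p => 2 * u p * g p with hF₂
  have hF₁c : Continuous F₁ := ((continuous_const.mul hu.continuous).mul hfc)
  have hF₂c : Continuous F₂ := ((continuous_const.mul hu.continuous).mul hgc)
  have hF₁s : HasCompactSupport F₁ := (hfs.mul_left)
  have hF₂s : HasCompactSupport F₂ := (hgs.mul_left)
  have hF₁i : Integrable F₁ := hF₁c.integrable_of_hasCompactSupport hF₁s
  have hF₂i : Integrable F₂ := hF₂c.integrable_of_hasCompactSupport hF₂s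
  -- slices as isometries
  have hiso1 : ∀ b : ℝ, Isometry (fun t : ℝ => (t, b)) := by
    intro b x y
    simp [Prod.edist_eq]
  have hiso2 : ∀ a : ℝ, Isometry (fun s : ℝ => (a, s)) := by
    intro a x y
    simp [Prod.edist_eq]
  -- the functions A and B
  set A : ℝ → ℝ := fun b => ∫ t, |F₁ (t, b)| with hA
  set B : ℝ → ℝ := fun a => ∫ s, |F₂ (a, s)| with hB
  have hA0 : ∀ b, 0 ≤ A b := fun b => integral_nonneg fun t => abs_nonneg _
  have hB0 : ∀ a, 0 ≤ B a := fun a => integral_nonneg fun s => abs_nonneg _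
  -- pointwise bound
  have key : ∀ a b : ℝ, u (a, b) ^ 2 ≤ A b ∧ u (a, b) ^ 2 ≤ B a := by
    intro a b
    constructor
    · have hw : ∀ t : ℝ, HasDerivAt (fun t => u (t, b) ^ 2) (F₁ (t, b)) t := by
        intro t
        have h1 : HasDerivAt (fun t : ℝ => u (t, b)) (f (t, b)) t := by
          have h2 : HasDerivAt (fun t : ℝ => ((t : ℝ), b)) ((1 : ℝ), (0 : ℝ)) t :=
            (hasDerivAt_id t).prodMk (hasDerivAt_const t b)
          exact (hud (t, b)).hasFDerivAt.comp_hasDerivAt t h2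
        have := h1.fun_pow 2
        simpa [hF₁, mul_comm, mul_assoc, mul_left_comm] using this
      have hwc : HasCompactSupport (fun t => u (t, b) ^ 2) := by
        have h1 : HasCompactSupport (fun t : ℝ => u (t, b)) :=
          hc.comp_isClosedEmbedding (hiso1 b).isClosedEmbedding
        exact h1.comp_left (g := fun x : ℝ => x ^ 2) (by norm_num)
      have hwi : Integrable (fun t => F₁ (t, b)) :=
        (hF₁c.comp (continuous_id.prodMk continuous_const)).integrable_of_hasCompactSupport
          (hF₁s.comp_isClosedEmbedding (hiso1 b).isClosedEmbedding)
      exact slice_bound hw hwc hwi a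
    · have hw : ∀ s : ℝ, HasDerivAt (fun s => u (a, s) ^ 2) (F₂ (a, s)) s := by
        intro s
        have h1 : HasDerivAt (fun s : ℝ => u (a, s)) (g (a, s)) s := by
          have h2 : HasDerivAt (fun s : ℝ => (a, (s : ℝ))) ((0 : ℝ), (1 : ℝ)) s :=
            (hasDerivAt_const s a).prodMk (hasDerivAt_id s)
          exact (hud (a, s)).hasFDerivAt.comp_hasDerivAt s h2
        have := h1.fun_pow 2
        simpa [hF₂, mul_comm, mul_assoc, mul_left_comm] using this
      have hwc : HasCompactSupport (fun s => u (a, s) ^ 2) := by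
        have h1 : HasCompactSupport (fun s : ℝ => u (a, s)) :=
          hc.comp_isClosedEmbedding (hiso2 a).isClosedEmbedding
        exact h1.comp_left (g := fun x : ℝ => x ^ 2) (by norm_num)
      have hwi : Integrable (fun s => F₂ (a, s)) :=
        (hF₂c.comp (continuous_const.prodMk continuous_id)).integrable_of_hasCompactSupport
          (hF₂s.comp_isClosedEmbedding (hiso2 a).isClosedEmbedding)
      exact slice_bound hw hwc hwi b
  -- integrability on the product
  have hvol : (volume : Measure (ℝ × ℝ)) = (volume : Measure ℝ).prod volume :=
    Measure.volume_eq_prod ℝ ℝ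
  have hF₁i' : Integrable F₁ ((volume : Measure ℝ).prod volume) := by rwa [← hvol]
  have hF₂i' : Integrable F₂ ((volume : Measure ℝ).prod volume) := by rwa [← hvol]
  have hAi : Integrable A := by
    have := (hF₁i'.abs.swap).integral_prod_left
    simpa [Function.comp, hA] using this
  have hBi : Integrable B := by
    have := (hF₂i'.abs).integral_prod_left
    simpa [hB] using this
  have hu4i : Integrable (fun p : ℝ × ℝ => u p ^ 4) :=
    (hu.continuous.pow 4).integrable_of_hasCompactSupport
      (hc.comp_left (g := fun x : ℝ => x ^ 4) (by norm_num) :)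
  -- step 1
  have step1 : ∫ p : ℝ × ℝ, u p ^ 4 ≤ (∫ a, B a) * (∫ b, A b) := by
    have hBA : Integrable (fun p : ℝ × ℝ => B p.1 * A p.2) := by
      rw [hvol]; exact hBi.mul_prod hAi
    calc ∫ p : ℝ × ℝ, u p ^ 4 ≤ ∫ p : ℝ × ℝ, B p.1 * A p.2 := by
          apply integral_mono hu4i hBA
          intro p
          show u p ^ 4 ≤ B p.1 * A p.2
          have h1 : u p ^ 4 = u p ^ 2 * u p ^ 2 := by ring
          rw [h1]
          obtain ⟨hA', hB'⟩ := key p.1 p.2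
          exact mul_le_mul hB' hA' (sq_nonneg _) (hB0 _)
      _ = (∫ a, B a) * (∫ b, A b) := by rw [hvol]; exact integral_prod_mul B A
  -- identify ∫A and ∫B with double integrals
  have hIA : ∫ b, A b = ∫ p : ℝ × ℝ, |F₁ p| := by
    rw [hvol]
    have hint : Integrable (Function.uncurry fun t b => |F₁ (t, b)|)
        ((volume : Measure ℝ).prod volume) := hF₁i'.abs
    rw [hA, ← integral_integral_swap hint]
    exact integral_integral hint
  have hIB : ∫ a, B a = ∫ p : ℝ × ℝ, |F₂ p| := by
    rw [hvol]
    have hint : Integrable (Function.uncurry fun a s => |F₂ (a, s)|)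
        ((volume : Measure ℝ).prod volume) := hF₂i'.abs
    exact integral_integral hint
  -- Cauchy-Schwarz
  set X2 := ∫ p : ℝ × ℝ, u p ^ 2 with hX2
  set P2 := ∫ p : ℝ × ℝ, f p ^ 2 with hP2
  set Q2 := ∫ p : ℝ × ℝ, g p ^ 2 with hQ2
  have hX2nn : 0 ≤ X2 := integral_nonneg fun p => sq_nonneg _
  have hP2nn : 0 ≤ P2 := integral_nonneg fun p => sq_nonneg _
  have hQ2nn : 0 ≤ Q2 := integral_nonneg fun p => sq_nonneg _
  have hconj : Real.HolderConjugate 2 2 := Real.holderConjugate_iff.mpr ⟨one_lt_two, by norm_num⟩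
  have habs2 : ∀ x : ℝ, |x| ^ (2 : ℝ) = x ^ 2 := fun x => by
    rw [show (2 : ℝ) = ((2 : ℕ) : ℝ) by norm_num, Real.rpow_natCast, sq_abs]
  have hmemu : MemLp (fun p : ℝ × ℝ => |u p|) (ENNReal.ofReal 2) :=
    (hu.continuous.abs).memLp_of_hasCompactSupport
      (hc.comp_left (g := fun x : ℝ => |x|) abs_zero)
  have hmemf : MemLp (fun p : ℝ × ℝ => |f p|) (ENNReal.ofReal 2) :=
    (hfc.abs).memLp_of_hasCompactSupport
      (hfs.comp_left (g := fun x : ℝ => |x|) abs_zero)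
  have hmemg : MemLp (fun p : ℝ × ℝ => |g p|) (ENNReal.ofReal 2) :=
    (hgc.abs).memLp_of_hasCompactSupport
      (hgs.comp_left (g := fun x : ℝ => |x|) abs_zero)
  have hcs1 : ∫ p : ℝ × ℝ, |u p| * |f p| ≤ Real.sqrt X2 * Real.sqrt P2 := by
    have h := integral_mul_le_Lp_mul_Lq_of_nonneg hconj
      (Filter.Eventually.of_forall fun p => abs_nonneg (u p))
      (Filter.Eventually.of_forall fun p => abs_nonneg (f p)) hmemu hmemf
    simp_rw [habs2] at h
    rwa [← Real.sqrt_eq_rpow, ← Real.sqrt_eq_rpow] at h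
  have hcs2 : ∫ p : ℝ × ℝ, |u p| * |g p| ≤ Real.sqrt X2 * Real.sqrt Q2 := by
    have h := integral_mul_le_Lp_mul_Lq_of_nonneg hconj
      (Filter.Eventually.of_forall fun p => abs_nonneg (u p))
      (Filter.Eventually.of_forall fun p => abs_nonneg (g p)) hmemu hmemg
    simp_rw [habs2] at h
    rwa [← Real.sqrt_eq_rpow, ← Real.sqrt_eq_rpow] at h
  have hFA : ∫ p : ℝ × ℝ, |F₁ p| = 2 * ∫ p : ℝ × ℝ, |u p| * |f p| := by
    have h : ∀ p : ℝ × ℝ, |F₁ p| = 2 * (|u p| * |f p|) := fun p => by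
      simp [hF₁, abs_mul, mul_assoc]
    simp_rw [h]
    exact integral_const_mul 2 _
  have hFB : ∫ p : ℝ × ℝ, |F₂ p| = 2 * ∫ p : ℝ × ℝ, |u p| * |g p| := by
    have h : ∀ p : ℝ × ℝ, |F₂ p| = 2 * (|u p| * |g p|) := fun p => by
      simp [hF₂, abs_mul, mul_assoc]
    simp_rw [h]
    exact integral_const_mul 2 _
  have hf2i : Integrable (fun p : ℝ × ℝ => f p ^ 2) :=
    (hfc.pow 2).integrable_of_hasCompactSupport
      (hfs.comp_left (g := fun x : ℝ => x ^ 2) (by norm_num) :)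
  have hg2i : Integrable (fun p : ℝ × ℝ => g p ^ 2) :=
    (hgc.pow 2).integrable_of_hasCompactSupport
      (hgs.comp_left (g := fun x : ℝ => x ^ 2) (by norm_num) :)
  have hsum : ∫ p : ℝ × ℝ, (f p ^ 2 + g p ^ 2) = P2 + Q2 := integral_add hf2i hg2i
  have hS0 : 0 ≤ ∫ p : ℝ × ℝ, |u p| * |f p| :=
    integral_nonneg fun p => mul_nonneg (abs_nonneg _) (abs_nonneg _)
  have hT0 : 0 ≤ ∫ p : ℝ × ℝ, |u p| * |g p| :=
    integral_nonneg fun p => mul_nonneg (abs_nonneg _) (abs_nonneg _)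
  have final : (∫ a, B a) * (∫ b, A b) ≤ 2 * X2 * (P2 + Q2) := by
    rw [hIA, hIB, hFA, hFB]
    nlinarith [Real.sq_sqrt hX2nn, Real.sq_sqrt hP2nn, Real.sq_sqrt hQ2nn,
      Real.sqrt_nonneg X2, Real.sqrt_nonneg P2, Real.sqrt_nonneg Q2,
      sq_nonneg (Real.sqrt P2 - Real.sqrt Q2),
      mul_le_mul hcs2 hcs1 hS0 (mul_nonneg (Real.sqrt_nonneg X2) (Real.sqrt_nonneg Q2)),
      mul_nonneg (mul_nonneg (Real.sqrt_nonneg X2) (Real.sqrt_nonneg X2))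
        (mul_nonneg (Real.sqrt_nonneg P2) (Real.sqrt_nonneg Q2)),
      sq_nonneg (Real.sqrt X2)]
  calc ∫ p : ℝ × ℝ, u p ^ 4 ≤ (∫ a, B a) * (∫ b, A b) := step1
    _ ≤ 2 * X2 * (P2 + Q2) := final
    _ = 2 * X2 * ∫ p : ℝ × ℝ, (f p ^ 2 + g p ^ 2) := by rw [hsum]
    _ = 2 * (∫ p : ℝ × ℝ, u p ^ 2) *
        ∫ p : ℝ × ℝ, (fderiv ℝ u p (1, 0)) ^ 2 + (fderiv ℝ u p (0, 1)) ^ 2 := rfl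

noncomputable def ladyPhi : ℝ × ℝ → EuclideanSpace ℝ (Fin 2) :=
  ⇑(MeasurableEquiv.toLp 2 (Fin 2 → ℝ)) ∘ ⇑(MeasurableEquiv.finTwoArrow (α := ℝ)).symm

noncomputable def ladyPsi : ℝ × ℝ →L[ℝ] EuclideanSpace ℝ (Fin 2) :=
  (ContinuousLinearMap.fst ℝ ℝ ℝ).smulRight (EuclideanSpace.single 0 1) +
    (ContinuousLinearMap.snd ℝ ℝ ℝ).smulRight (EuclideanSpace.single 1 1)

lemma ladyPhi_eq : ladyPhi = ⇑ladyPsi := by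
  funext p
  ext i
  fin_cases i <;>
    simp [ladyPhi, ladyPsi, MeasurableEquiv.toLp_apply, MeasurableEquiv.finTwoArrow,
      EuclideanSpace.single_apply]

noncomputable def ladyHomeo : Homeomorph (ℝ × ℝ) (EuclideanSpace ℝ (Fin 2)) where
  toFun := ladyPhi
  invFun := fun x => (x 0, x 1)
  left_inv := by
    intro p
    simp [ladyPhi, MeasurableEquiv.toLp_apply, MeasurableEquiv.finTwoArrow]
  right_inv := by
    intro x
    ext i
    fin_cases i <;>
      simp [ladyPhi, MeasurableEquiv.toLp_apply, MeasurableEquiv.finTwoArrow]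
  continuous_toFun := ladyPhi_eq ▸ ladyPsi.continuous
  continuous_invFun :=
    ((EuclideanSpace.proj (0 : Fin 2)).continuous).prodMk
      ((EuclideanSpace.proj (1 : Fin 2)).continuous)

/-- the Ladyzhenskaya inequality in 2d: for a `C¹` compactly supported
`v : ℝ² → ℝ`, `∫ v⁴ ≤ 2 (∫ v²)(∫ |∇v|²)` with `|∇v|² = (∂₁v)² + (∂₂v)²`. -/
theorem ladyzhenskaya_inequality_2d
    (v : EuclideanSpace ℝ (Fin 2) → ℝ)
    (hv : ContDiff ℝ 1 v) (hsupp : HasCompactSupport v) :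
    ∫ x, v x ^ 4 ≤
      2 * (∫ x, v x ^ 2) *
        ∫ x, (fderiv ℝ v x (EuclideanSpace.single 0 1)) ^ 2 +
          (fderiv ℝ v x (EuclideanSpace.single 1 1)) ^ 2 := by
  have mp : MeasurePreserving ladyPhi volume volume :=
    ((EuclideanSpace.volume_preserving_symm_measurableEquiv_toLp (Fin 2)).symm _).comp
      ((volume_preserving_finTwoArrow ℝ).symm _)
  have he : MeasurableEmbedding ladyPhi :=
    ((MeasurableEquiv.finTwoArrow (α := ℝ)).symm.trans
      (MeasurableEquiv.toLp 2 (Fin 2 → ℝ))).measurableEmbedding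
  set u : ℝ × ℝ → ℝ := fun p => v (ladyPhi p) with hu
  have hu' : ContDiff ℝ 1 u := by
    rw [hu, ladyPhi_eq]
    exact hv.comp ladyPsi.contDiff
  have hcs : HasCompactSupport u := hsupp.comp_homeomorph ladyHomeo
  have hPsid : ∀ p : ℝ × ℝ, HasFDerivAt ladyPhi ladyPsi p := by
    intro p
    rw [ladyPhi_eq]
    exact ladyPsi.hasFDerivAt
  have hder : ∀ p : ℝ × ℝ, fderiv ℝ u p = (fderiv ℝ v (ladyPhi p)).comp ladyPsi := by
    intro p
    exact ((hv.differentiable one_ne_zero (ladyPhi p)).hasFDerivAt.comp p (hPsid p)).fderiv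
  have hPsi0 : ladyPsi ((1 : ℝ), (0 : ℝ)) = EuclideanSpace.single 0 1 := by simp [ladyPsi]
  have hPsi1 : ladyPsi ((0 : ℝ), (1 : ℝ)) = EuclideanSpace.single 1 1 := by simp [ladyPsi]
  have h1 : ∫ x, v x ^ 4 = ∫ p : ℝ × ℝ, u p ^ 4 :=
    (mp.integral_comp he fun x => v x ^ 4).symm
  have h2 : ∫ x, v x ^ 2 = ∫ p : ℝ × ℝ, u p ^ 2 :=
    (mp.integral_comp he fun x => v x ^ 2).symm
  have h3 : (∫ x, (fderiv ℝ v x (EuclideanSpace.single 0 1)) ^ 2 +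
      (fderiv ℝ v x (EuclideanSpace.single 1 1)) ^ 2) =
      ∫ p : ℝ × ℝ, (fderiv ℝ u p (1, 0)) ^ 2 + (fderiv ℝ u p (0, 1)) ^ 2 := by
    rw [← mp.integral_comp he (fun x => (fderiv ℝ v x (EuclideanSpace.single 0 1)) ^ 2 +
      (fderiv ℝ v x (EuclideanSpace.single 1 1)) ^ 2)]
    congr 1
    funext p
    rw [hder p]
    simp [hPsi0, hPsi1]
  rw [h1, h2, h3]
  exact ladyzhenskaya_core u hu' hcs
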